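/- arXiv:1605.05024 — 2 statements merged into one kernel-verified Lean document; each statement's English description precedes it below -/
import Mathlib

section
/- Let F be a finite field and let p₁(x) and p₂(x) be two distinct (non-associate) irreducible polynomials in F[x] of degrees n₁ and n₂ respectively, and set f(x) = p₁(x)·p₂(x). Suppose e and d are positive integers with e·d ≡ 1 (mod (|F|^{n₁} − 1)(|F|^{n₂} − 1)). Then for every polynomial M(x) in F[x], one has (M(x)^e)^d ≡ M(x) (mod f(x)). -/
open Polynomial

theorem aux_pow {F : Type*} [Field F] [Fintype F] (p : F[X]) (hp : Irreducible p)
    (k : ℕ) (hk : k ≡ 1 [MOD Fintype.card F ^ p.natDegree - 1]) (hk0 : 0 < k)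
    (M : F[X]) : p ∣ M ^ k - M := by
  haveI := Fact.mk hp
  have hp0 : p ≠ 0 := hp.ne_zero
  haveI : FiniteDimensional F (AdjoinRoot p) := (AdjoinRoot.powerBasis hp0).finite
  haveI : Finite (AdjoinRoot p) := Module.finite_of_finite F
  haveI : Fintype (AdjoinRoot p) := Fintype.ofFinite _
  have hcard : Fintype.card (AdjoinRoot p) = Fintype.card F ^ p.natDegree := by
    rw [Module.card_eq_pow_finrank (K := F), (AdjoinRoot.powerBasis hp0).finrank,
      AdjoinRoot.powerBasis_dim]
  rw [← AdjoinRoot.mk_eq_zero, map_sub, map_pow]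
  set a := AdjoinRoot.mk p M with ha
  rcases eq_or_ne a 0 with h0 | h0
  · simp [h0, zero_pow hk0.ne']
  · have h1 : 1 ≤ k := hk0
    obtain ⟨t, ht⟩ := (Nat.modEq_iff_dvd' h1).mp hk.symm
    have hkeq : k = 1 + (Fintype.card (AdjoinRoot p) - 1) * t := by
      rw [hcard]; omega
    rw [hkeq, pow_add, pow_one, pow_mul, FiniteField.pow_card_sub_one_eq_one a h0,
      one_pow, mul_one, sub_self]

/-- Correctness of decryption for the Kravitz–Reeds RSA over polynomials:
with `f = p₁ * p₂` a product of two non-associate irreducible polynomials of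
degrees `n₁, n₂`, and `e * d ≡ 1 (mod (|F|^{n₁} - 1)(|F|^{n₂} - 1))`, one has
`(M^e)^d ≡ M (mod f)` for every polynomial `M`. -/
theorem rsa_polynomial_two_prime_correct {F : Type*} [Field F] [Fintype F]
    (p₁ p₂ : F[X]) (hp₁ : Irreducible p₁) (hp₂ : Irreducible p₂)
    (hne : ¬ Associated p₁ p₂)
    (n₁ n₂ : ℕ) (hd₁ : p₁.natDegree = n₁) (hd₂ : p₂.natDegree = n₂)
    (f : F[X]) (hf : f = p₁ * p₂)
    (e d : ℕ) (he : 0 < e) (hd : 0 < d)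
    (hed : e * d ≡ 1 [MOD (Fintype.card F ^ n₁ - 1) * (Fintype.card F ^ n₂ - 1)]) :
    ∀ M : F[X], f ∣ ((M ^ e) ^ d - M) := by
  intro M
  rw [hf, ← pow_mul]
  have hk0 : 0 < e * d := Nat.mul_pos he hd
  have h1 : e * d ≡ 1 [MOD Fintype.card F ^ n₁ - 1] :=
    hed.of_dvd (dvd_mul_right _ _)
  have h2 : e * d ≡ 1 [MOD Fintype.card F ^ n₂ - 1] :=
    hed.of_dvd (dvd_mul_left _ _)
  have d1 : p₁ ∣ M ^ (e * d) - M := aux_pow p₁ hp₁ _ (hd₁ ▸ h1) hk0 M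
  have d2 : p₂ ∣ M ^ (e * d) - M := aux_pow p₂ hp₂ _ (hd₂ ▸ h2) hk0 M
  have hcop : IsCoprime p₁ p₂ := by
    rw [Irreducible.coprime_iff_not_dvd hp₁]
    intro hdvd
    exact hne ((hp₁.associated_of_dvd hp₂ hdvd))
  exact hcop.mul_dvd d1 d2
end

section
/- Let F be a finite field, let b be a positive integer, and let p₁(x), …, p_b(x) be pairwise non-associate irreducible polynomials in F[x] of degrees n₁, …, n_b respectively; set f(x) = p₁(x)·p₂(x)⋯p_b(x). Suppose e and d are positive integers with e·d ≡ 1 (mod ∏_{i=1}^{b}(|F|^{n_i} − 1)). Then for every polynomial M(x) in F[x], one has (M(x)^e)^d ≡ M(x) (mod f(x)). -/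
open Polynomial

lemma pow_eq_self_of_modEq_aux {K : Type*} [Field K] [Fintype K] (a : K) (m : ℕ)
    (hm : 0 < m) (h : m ≡ 1 [MOD Fintype.card K - 1]) : a ^ m = a := by
  rcases eq_or_ne a 0 with rfl | ha
  · simp [zero_pow hm.ne']
  · obtain ⟨k, hk⟩ := (Nat.modEq_iff_dvd' hm).mp h.symm
    have hmk : m = (Fintype.card K - 1) * k + 1 := by omega
    rw [hmk, pow_add, pow_mul, FiniteField.pow_card_sub_one_eq_one a ha, one_pow, pow_one,
      one_mul]

lemma irreducible_dvd_pow_sub_aux {F : Type*} [Field F] [Fintype F] (p : F[X])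
    (hp : Irreducible p) (m : ℕ) (hm : 0 < m)
    (h : m ≡ 1 [MOD Fintype.card F ^ p.natDegree - 1]) (M : F[X]) :
    p ∣ M ^ m - M := by
  haveI : Fact (Irreducible p) := ⟨hp⟩
  let pb := AdjoinRoot.powerBasis hp.ne_zero
  haveI : Fintype (AdjoinRoot p) := Module.fintypeOfFintype pb.basis
  have hcard : Fintype.card (AdjoinRoot p) = Fintype.card F ^ p.natDegree := by
    rw [Module.card_fintype pb.basis, Fintype.card_fin, AdjoinRoot.powerBasis_dim]
  rw [← AdjoinRoot.mk_eq_zero, map_sub, map_pow, sub_eq_zero]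
  exact pow_eq_self_of_modEq_aux _ m hm (by rwa [hcard])

/-- Correctness of decryption for the multi-prime RSA over polynomials:
with `f = ∏ p i` a product of `b` pairwise non-associate irreducible
polynomials of degrees `n i`, and `e * d ≡ 1 (mod ∏ (|F|^{n i} - 1))`, one has
`(M^e)^d ≡ M (mod f)` for every polynomial `M`. -/
theorem rsa_polynomial_multi_prime_correct {F : Type*} [Field F] [Fintype F]
    (b : ℕ) (hb : 0 < b)
    (p : Fin b → F[X]) (hp : ∀ i, Irreducible (p i))
    (hne : ∀ i j, i ≠ j → ¬ Associated (p i) (p j))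
    (n : Fin b → ℕ) (hdeg : ∀ i, (p i).natDegree = n i)
    (f : F[X]) (hf : f = ∏ i, p i)
    (e d : ℕ) (he : 0 < e) (hd : 0 < d)
    (hed : e * d ≡ 1 [MOD ∏ i, (Fintype.card F ^ n i - 1)]) :
    ∀ M : F[X], f ∣ ((M ^ e) ^ d - M) := by
  intro M
  rw [hf, ← pow_mul]
  apply Finset.prod_dvd_of_coprime
  · intro i _ j _ hij
    exact (hp i).coprime_iff_not_dvd.mpr fun hdvd =>
      hne i j hij ((hp i).associated_of_dvd (hp j) hdvd)
  · intro i _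
    apply irreducible_dvd_pow_sub_aux (p i) (hp i) (e * d) (Nat.mul_pos he hd)
    rw [hdeg i]
    exact hed.of_dvd (Finset.dvd_prod_of_mem (fun j => Fintype.card F ^ n j - 1) (Finset.mem_univ i))
end
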